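/- arXiv:2210.03232 — 2 statements merged into one kernel-verified Lean document; each statement's English description precedes it below -/
import Mathlib

section
/- Let f : ℝ^n → ℝ be a convex lower semicontinuous function and (x, t) ∈ ℝ^n × ℝ with t < f(x). If τ > 0 satisfies f(prox_{τ f}(x)) = t + τ, then the orthogonal projection of (x, t) onto the epigraph of f equals (prox_{τ f}(x), t + τ). -/
/-- if `t < f x`, `τ > 0`, `p = prox_{τ f}(x)` and `f p = t + τ`, then the
projection of `(x,t)` onto `epi f` is `(p, t + τ)`: it lies in the epigraph and is the
nearest point of the epigraph to `(x,t)` in the Euclidean norm on `ℝ^n × ℝ`. -/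
theorem stmt_5 {n : ℕ} (f : EuclideanSpace ℝ (Fin n) → ℝ)
    (hconv : ConvexOn ℝ Set.univ f) (hlsc : LowerSemicontinuous f)
    (x p : EuclideanSpace ℝ (Fin n)) (t τ : ℝ) (ht : t < f x) (hτ : 0 < τ)
    (hprox : ∀ y, 1 / (2 * τ) * ‖p - x‖ ^ 2 + f p ≤ 1 / (2 * τ) * ‖y - x‖ ^ 2 + f y)
    (hfp : f p = t + τ) :
    f p ≤ t + τ ∧
      ∀ y : EuclideanSpace ℝ (Fin n), ∀ s : ℝ, f y ≤ s →
        ‖x - p‖ ^ 2 + (t - (t + τ)) ^ 2 ≤ ‖x - y‖ ^ 2 + (t - s) ^ 2 := by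
  refine ⟨le_of_eq hfp, fun y s hs => ?_⟩
  have h := hprox y
  rw [norm_sub_rev p x, norm_sub_rev y x] at h
  have h2 : ‖x - p‖ ^ 2 + 2 * τ * f p ≤ ‖x - y‖ ^ 2 + 2 * τ * f y := by
    have h2τ : (0:ℝ) < 2 * τ := by linarith
    have := mul_le_mul_of_nonneg_left h h2τ.le
    field_simp at this
    nlinarith [this]
  nlinarith [sq_nonneg (s - t - τ)]
end

section
/- Let z_1, …, z_p be real and nonzero with distinct nonzero products: consider a 2m×p real matrix B partitioned into blocks B₁, B₂ ∈ ℝ^{m×p}, and for K ≥ 0 define T_K by multiplying the j-th column of B₁ by z_j^K and leaving B₂ unchanged. If T_0 and T_1 both have full column rank p ≤ 2m, then there exists K_0 such that T_K has full column rank for all K > K_0. -/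
/-!
The Gram determinant `det (T_Kᵀ T_K)` is an exponential sum `∑ c_u u ^ K` with nonzero real
bases `u`: it is the image of one determinant over the group algebra `ℝ[ℝˣ]` under the
evaluations `[u] ↦ u ^ K`. Along even (resp. odd) `K` it becomes an exponential sum in the
positive bases `u ^ 2` whose value at `K = 0` (resp. `K = 1`) is nonzero, so some coefficient
is nonzero and the largest such base eventually dominates.
-/

open Filter Topology Finset Matrix

lemma eventually_sum_mul_pow_ne_zero_of_pos (d : ℝ →₀ ℝ) (hd : d ≠ 0)
    (hpos : ∀ t ∈ d.support, 0 < t) :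
    ∀ᶠ n : ℕ in atTop, (d.sum fun t c => c * t ^ n) ≠ 0 := by
  set t₀ := d.support.max' (Finsupp.support_nonempty_iff.2 hd)
  have ht₀ : t₀ ∈ d.support := max'_mem _ _
  have ht₀pos : 0 < t₀ := hpos t₀ ht₀
  have hrest : Tendsto (fun n : ℕ => ∑ t ∈ d.support.erase t₀, d t * (t / t₀) ^ n)
      atTop (𝓝 0) := by
    simpa using tendsto_finsetSum (d.support.erase t₀) fun t ht =>
      (tendsto_pow_atTop_nhds_zero_of_lt_one
        (div_nonneg (hpos t (mem_of_mem_erase ht)).le ht₀pos.le)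
        ((div_lt_one ht₀pos).2 (lt_of_le_of_ne (le_max' _ _ (mem_of_mem_erase ht))
          (ne_of_mem_erase ht)))).const_mul (d t)
  filter_upwards [hrest.eventually_ne (neg_ne_zero.2 (Finsupp.mem_support_iff.1 ht₀)).symm]
    with n hn
  have hsplit : (d.sum fun t c => c * t ^ n)
      = t₀ ^ n * (d t₀ + ∑ t ∈ d.support.erase t₀, d t * (t / t₀) ^ n) := by
    rw [Finsupp.sum, ← add_sum_erase _ _ ht₀, mul_add, mul_sum]
    congr 1
    · ring
    · refine sum_congr rfl fun t _ => ?_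
      rw [div_pow]
      field_simp
  rw [hsplit]
  exact mul_ne_zero (pow_ne_zero _ ht₀pos.ne') fun h => hn (by linarith)

lemma eventually_sum_mul_pow_two_mul_add_ne_zero (x : ℝˣ →₀ ℝ) (σ : ℕ)
    (hσ : (x.sum fun u c => c * (u : ℝ) ^ σ) ≠ 0) :
    ∀ᶠ n : ℕ in atTop, (x.sum fun u c => c * (u : ℝ) ^ (2 * n + σ)) ≠ 0 := by
  set d : ℝ →₀ ℝ := x.sum fun u c => Finsupp.single ((u : ℝ) ^ 2) (c * (u : ℝ) ^ σ)
  have hd : ∀ n : ℕ, (d.sum fun t c => c * t ^ n)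
      = x.sum fun u c => c * (u : ℝ) ^ (2 * n + σ) := by
    intro n
    rw [Finsupp.sum_sum_index (fun _ => zero_mul _) (fun _ _ _ => add_mul _ _ _)]
    refine Finsupp.sum_congr fun u _ => ?_
    rw [Finsupp.sum_single_index (zero_mul _), pow_add, pow_mul]
    ring
  have hpos : ∀ t ∈ d.support, 0 < t := by
    intro t ht
    obtain ⟨u, -, hu⟩ := mem_biUnion.1 (Finsupp.support_sum ht)
    rw [Finset.mem_singleton.1 (Finsupp.support_single_subset hu)]
    exact pow_two_pos_of_ne_zero u.ne_zero
  have hd0 : d ≠ 0 := by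
    intro h
    apply hσ
    simpa [h] using (hd 0).symm
  simpa only [hd] using eventually_sum_mul_pow_ne_zero_of_pos d hd0 hpos

lemma Nat.eventually_atTop_of_even_of_odd {P : ℕ → Prop} (heven : ∀ᶠ n in atTop, P (2 * n))
    (hodd : ∀ᶠ n in atTop, P (2 * n + 1)) : ∀ᶠ n in atTop, P n := by
  obtain ⟨N₀, hN₀⟩ := eventually_atTop.1 heven
  obtain ⟨N₁, hN₁⟩ := eventually_atTop.1 hodd
  refine eventually_atTop.2 ⟨2 * (N₀ + N₁), fun n hn => ?_⟩
  rcases Nat.even_or_odd' n with ⟨k, rfl | rfl⟩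
  exacts [hN₀ k (by omega), hN₁ k (by omega)]

/-- An element `∑ c_u [u]` of `ℝ[ℝˣ]` encodes the exponential sum `K ↦ ∑ c_u u ^ K`. -/
noncomputable def evalPow (K : ℕ) : MonoidAlgebra ℝ ℝˣ →ₐ[ℝ] ℝ :=
  MonoidAlgebra.lift ℝ ℝ ℝˣ ((powMonoidHom K).comp (Units.coeHom ℝ))

lemma evalPow_apply (K : ℕ) (g : MonoidAlgebra ℝ ℝˣ) :
    evalPow K g = g.coeff.sum fun u c => c * (u : ℝ) ^ K := by
  simp [evalPow, MonoidAlgebra.lift_apply]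

lemma eventually_evalPow_ne_zero (g : MonoidAlgebra ℝ ℝˣ) (h0 : evalPow 0 g ≠ 0)
    (h1 : evalPow 1 g ≠ 0) : ∀ᶠ K in atTop, evalPow K g ≠ 0 := by
  simp only [evalPow_apply] at h0 h1 ⊢
  exact Nat.eventually_atTop_of_even_of_odd
    (eventually_sum_mul_pow_two_mul_add_ne_zero g.coeff 0 h0)
    (eventually_sum_mul_pow_two_mul_add_ne_zero g.coeff 1 h1)

lemma Matrix.rank_eq_card_iff_ker_eq_bot {m n K : Type*} [Fintype n] [Field K]
    (A : Matrix m n K) : A.rank = Fintype.card n ↔ LinearMap.ker A.mulVecLin = ⊥ := by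
  rw [← Submodule.finrank_eq_zero, rank]
  have := LinearMap.finrank_range_add_finrank_ker A.mulVecLin
  rw [Module.finrank_fintype_fun_eq_card] at this
  omega

lemma Matrix.rank_eq_card_iff_det_transpose_mul_self_ne_zero {m n K : Type*} [Fintype m]
    [Fintype n] [DecidableEq n] [Field K] [LinearOrder K] [IsStrictOrderedRing K]
    (A : Matrix m n K) : A.rank = Fintype.card n ↔ (Aᵀ * A).det ≠ 0 := by
  rw [← rank_transpose_mul_self, rank_eq_card_iff_ker_eq_bot, LinearMap.ker_eq_bot',
    Ne, ← exists_mulVec_eq_zero_iff]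
  exact ⟨fun h ⟨v, hv, hAv⟩ => hv (h v hAv), fun h v hAv => by_contra fun hv => h ⟨v, hv, hAv⟩⟩

theorem stmt_13_general {m p : ℕ} (B₁ B₂ : Matrix (Fin m) (Fin p) ℝ)
    (z : Fin p → ℝ) (hz : ∀ j, z j ≠ 0)
    (T : ℕ → Matrix (Fin m ⊕ Fin m) (Fin p) ℝ)
    (hT : ∀ K, T K = Matrix.fromRows (Matrix.of fun i j => B₁ i j * z j ^ K) B₂)
    (h0 : (T 0).rank = p) (h1 : (T 1).rank = p) :
    ∃ K₀ : ℕ, ∀ K > K₀, (T K).rank = p := by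
  let M : Matrix (Fin m ⊕ Fin m) (Fin p) (MonoidAlgebra ℝ ℝˣ) :=
    fromRows (of fun i j => B₁ i j • MonoidAlgebra.of ℝ ℝˣ (Units.mk0 (z j) (hz j)))
      (B₂.map (algebraMap ℝ _))
  have hrank : ∀ K, (T K).rank = p ↔ evalPow K (Mᵀ * M).det ≠ 0 := by
    intro K
    have hTM : T K = M.map (evalPow K) := by
      ext (i | i) j <;> simp [hT, M, evalPow]
    calc (T K).rank = p ↔ ((T K)ᵀ * T K).det ≠ 0 := by
          rw [← rank_eq_card_iff_det_transpose_mul_self_ne_zero, Fintype.card_fin]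
      _ ↔ evalPow K (Mᵀ * M).det ≠ 0 := by
          rw [hTM, AlgHom.map_det, AlgHom.mapMatrix_apply, Matrix.map_mul, transpose_map]
  rw [hrank] at h0 h1
  simp only [hrank]
  obtain ⟨K₀, hK₀⟩ := eventually_atTop.1 (eventually_evalPow_ne_zero _ h0 h1)
  exact ⟨K₀, fun K hK => hK₀ K hK.le⟩

/-- with `T_K` obtained from `B = [B₁; B₂]` by scaling the `j`-th column of
`B₁` by `z_j^K`, if `T_0` and `T_1` have full column rank `p`, then `T_K` has full column
rank for all sufficiently large `K`. -/
theorem stmt_13 {m p : ℕ} (B₁ B₂ : Matrix (Fin m) (Fin p) ℝ)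
    (z : Fin p → ℝ) (hz : ∀ j, z j ≠ 0)
    (T : ℕ → Matrix (Fin m ⊕ Fin m) (Fin p) ℝ)
    (hT : ∀ K, T K = Matrix.fromRows (Matrix.of fun i j => B₁ i j * z j ^ K) B₂)
    (hp : p ≤ 2 * m)
    (h0 : (T 0).rank = p) (h1 : (T 1).rank = p) :
    ∃ K₀ : ℕ, ∀ K > K₀, (T K).rank = p :=
  stmt_13_general B₁ B₂ z hz T hT h0 h1
end
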